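/- arXiv:1705.03224 — 2 statements merged into one kernel-verified Lean document; each statement's English description precedes it below -/
import Mathlib

section
/- Let $U:[0,\infty)\to\mathbb{R}$ be continuous, $g_t$ the chordal Loewner chain driven by $U$, $z\in\mathbb{H}$, and $\lambda_t=\min_{0\le s\le t}|z-U(s)|$. If $\lambda_t\ge\sqrt{8t}$ then $|g_t(z)-z| < \frac{4t}{\lambda_t+\sqrt{\lambda_t^2-8t}}$ and $1\ge \frac{\Im g_t(z)}{\Im z} > \exp\left(-\frac{8t}{(\lambda_t+\sqrt{\lambda_t^2-8t})^2}\right)$. -/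
/-!
While `|g_s - U(s)| > m`, the Loewner equation moves `g` at speed less than `2/m`, so
`|g_s - z| ≤ 2s/m` and `|g_s - U(s)| ≥ λ - 2s/m`. For the larger root
`m = (λ + √(λ² - 8t))/2` of `m² - λm + 2t` this lower bound exceeds `m` for `s < t`, and a
continuity argument keeps `|g_s - U(s)| > m` on `[0, t)`. Hence `|g_t - z| < 2t/m`, and the
integrating factor `Im g_t = Im z · exp(-∫₀ᵗ 2 |g_s - U(s)|⁻² ds)` puts `Im g_t / Im z` between
`exp(-2t/m²)` and `1`.
-/

open Set MeasureTheory

theorem forall_lt_of_forall_Ico_lt_imp_lt {f : ℝ → ℝ} {a b c : ℝ} (hf : ContinuousOn f (Ico a b))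
    (hstep : ∀ s ∈ Ico a b, (∀ u ∈ Ico a s, c < f u) → c < f s) :
    ∀ s ∈ Ico a b, c < f s := by
  intro s₀ hs₀
  by_contra! hle
  set B := Icc a s₀ ∩ f ⁻¹' Iic c
  have hBbdd : BddBelow B := ⟨a, fun x hx => hx.1.1⟩
  have hBclosed : IsClosed B :=
    (hf.mono (Icc_subset_Ico_right hs₀.2)).preimage_isClosed_of_isClosed isClosed_Icc isClosed_Iic
  have hinf : sInf B ∈ B := hBclosed.csInf_mem ⟨s₀, ⟨hs₀.1, le_rfl⟩, hle⟩ hBbdd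
  refine (show f (sInf B) ≤ c from hinf.2).not_gt
    (hstep _ ⟨hinf.1.1, hinf.1.2.trans_lt hs₀.2⟩ fun u hu => ?_)
  by_contra! hu'
  exact hu.2.not_ge (csInf_le hBbdd ⟨⟨hu.1, hu.2.le.trans hinf.1.2⟩, hu'⟩)

theorem intervalIntegral_lt_mul_sub_of_lt {f : ℝ → ℝ} {a b C : ℝ} (hab : a < b)
    (hf : IntervalIntegrable f volume a b) (hlt : ∀ x ∈ Ioo a b, f x < C) :
    ∫ x in a..b, f x < C * (b - a) := by
  have hpos := intervalIntegral.intervalIntegral_pos_of_pos_on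
    (intervalIntegrable_const.sub hf) (fun x hx => sub_pos.2 (hlt x hx)) hab
  rw [intervalIntegral.integral_sub intervalIntegrable_const hf, intervalIntegral.integral_const,
    smul_eq_mul] at hpos
  linarith

theorem norm_image_sub_lt_of_norm_deriv_lt {E : Type*} [NormedAddCommGroup E] [NormedSpace ℝ E]
    [CompleteSpace E] {f f' : ℝ → E} {a b C : ℝ} (hab : a < b)
    (hf : ∀ x ∈ Icc a b, HasDerivAt f (f' x) x) (hf' : ContinuousOn f' (Icc a b))
    (bound : ∀ x ∈ Ioo a b, ‖f' x‖ < C) : ‖f b - f a‖ < C * (b - a) := by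
  have hint : IntervalIntegrable f' volume a b := hf'.intervalIntegrable_of_Icc hab.le
  rw [← intervalIntegral.integral_eq_sub_of_hasDerivAt
    (fun x hx => hf x (uIcc_of_le hab.le ▸ hx)) hint]
  calc ‖∫ x in a..b, f' x‖ ≤ ∫ x in a..b, ‖f' x‖ :=
        intervalIntegral.norm_integral_le_integral_norm hab.le
    _ < C * (b - a) := intervalIntegral_lt_mul_sub_of_lt hab hint.norm bound

theorem eq_mul_exp_neg_integral_of_hasDerivAt {y q : ℝ → ℝ} {a b : ℝ} (hab : a ≤ b)
    (hq : ContinuousOn q (Icc a b)) (hy : ∀ x ∈ Icc a b, HasDerivAt y (-(q x * y x)) x) :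
    y b = y a * Real.exp (-∫ x in a..b, q x) := by
  -- extend `q` continuously to `ℝ`, so that its primitive is differentiable everywhere
  set q' : ℝ → ℝ := fun x => q (projIcc a b hab x)
  have hq'c : Continuous q' := hq.comp_continuous
    (continuous_subtype_val.comp continuous_projIcc) fun x => (projIcc a b hab x).2
  have hq'q : ∀ x ∈ Icc a b, q' x = q x := fun x hx => by simp [q', projIcc_of_mem hab hx]
  set J : ℝ → ℝ := fun x => ∫ u in a..x, q' u
  have hconst : ∀ x ∈ Icc a b, HasDerivAt (fun x => y x * Real.exp (J x)) 0 x := by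
    intro x hx
    exact ((hy x hx).mul (hq'c.integral_hasStrictDerivAt a x).hasDerivAt.exp).congr_deriv
      (by rw [hq'q x hx]; ring)
  have hba := constant_of_has_deriv_right_zero
    (fun x hx => (hconst x hx).continuousAt.continuousWithinAt)
    (fun x hx => (hconst x (Ico_subset_Icc_self hx)).hasDerivWithinAt) b ⟨hab, le_rfl⟩
  have hJ : J b = ∫ x in a..b, q x :=
    intervalIntegral.integral_congr fun x hx => hq'q x (uIcc_of_le hab ▸ hx)
  simp only [J, intervalIntegral.integral_same, Real.exp_zero, mul_one] at hba hJ
  rw [← hJ, ← hba, mul_assoc, ← Real.exp_add, add_neg_cancel, Real.exp_zero, mul_one]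

section Loewner

variable {U : ℝ → ℝ} {g : ℝ → ℂ} {t : ℝ}

theorem loewner_continuousOn_sub (hU : Continuous U)
    (hode : ∀ s ∈ Icc 0 t, HasDerivAt g (2 / (g s - U s)) s) :
    ContinuousOn (fun s => g s - U s) (Icc 0 t) := fun s hs =>
  ((hode s hs).continuousAt.sub (Complex.continuous_ofReal.comp hU).continuousAt).continuousWithinAt

theorem loewner_continuousOn_two_div_norm_sq (hU : Continuous U)
    (hode : ∀ s ∈ Icc 0 t, HasDerivAt g (2 / (g s - U s)) s) (hne : ∀ s ∈ Icc 0 t, g s ≠ U s) :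
    ContinuousOn (fun s => 2 / ‖g s - U s‖ ^ 2) (Icc 0 t) :=
  continuousOn_const.div ((loewner_continuousOn_sub hU hode).norm.pow 2)
    fun s hs => pow_ne_zero 2 (norm_ne_zero_iff.2 (sub_ne_zero.2 (hne s hs)))

theorem loewner_lt_norm_sub {m lam : ℝ} (hU : Continuous U)
    (hode : ∀ s ∈ Icc 0 t, HasDerivAt g (2 / (g s - U s)) s) (hm : 0 < m)
    (hlam : ∀ s ∈ Icc 0 t, lam ≤ ‖g 0 - U s‖) (hroot : m + 2 * t / m ≤ lam) :
    ∀ s ∈ Ico 0 t, m < ‖g s - U s‖ := by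
  refine forall_lt_of_forall_Ico_lt_imp_lt
    ((loewner_continuousOn_sub hU hode).norm.mono Ico_subset_Icc_self) fun s hs hlt => ?_
  have hsub : Icc 0 s ⊆ Icc 0 t := Icc_subset_Icc_right hs.2.le
  have hmove : ‖g s - g 0‖ ≤ 2 / m * (s - 0) :=
    norm_image_sub_le_of_norm_deriv_le_segment'
      (fun u hu => (hode u (hsub hu)).hasDerivWithinAt)
      (fun u hu => by
        rw [norm_div, Complex.norm_ofNat]
        exact div_le_div_of_nonneg_left zero_le_two hm (hlt u hu).le)
      s ⟨hs.1, le_rfl⟩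
  have htri : ‖g 0 - U s‖ ≤ ‖g s - g 0‖ + ‖g s - U s‖ := by
    simpa [norm_sub_rev (g 0)] using norm_sub_le_norm_sub_add_norm_sub (g 0) (g s) (U s)
  have hst : 2 / m * s < 2 * t / m := by
    rw [div_mul_eq_mul_div]
    exact div_lt_div_of_pos_right (by linarith [hs.2]) hm
  linarith [hlam s ⟨hs.1, hs.2.le⟩]

theorem loewner_norm_sub_lt {m : ℝ} (ht : 0 < t) (hU : Continuous U)
    (hode : ∀ s ∈ Icc 0 t, HasDerivAt g (2 / (g s - U s)) s) (hne : ∀ s ∈ Icc 0 t, g s ≠ U s)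
    (hm : 0 < m) (hdist : ∀ s ∈ Ioo 0 t, m < ‖g s - U s‖) :
    ‖g t - g 0‖ < 2 / m * t := by
  have h := norm_image_sub_lt_of_norm_deriv_lt ht hode
    (continuousOn_const.div (loewner_continuousOn_sub hU hode) fun s hs => sub_ne_zero.2 (hne s hs))
    fun s hs => by
      rw [norm_div, Complex.norm_ofNat]
      exact div_lt_div_of_pos_left two_pos hm (hdist s hs)
  rwa [sub_zero] at h

theorem loewner_im_eq (ht : 0 ≤ t) (hU : Continuous U)
    (hode : ∀ s ∈ Icc 0 t, HasDerivAt g (2 / (g s - U s)) s) (hne : ∀ s ∈ Icc 0 t, g s ≠ U s) :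
    (g t).im = (g 0).im * Real.exp (-∫ s in 0..t, 2 / ‖g s - U s‖ ^ 2) := by
  refine eq_mul_exp_neg_integral_of_hasDerivAt (y := fun s => (g s).im)
    (q := fun s => 2 / ‖g s - U s‖ ^ 2) ht
    (loewner_continuousOn_two_div_norm_sq hU hode hne) fun s hs => ?_
  refine (Complex.imCLM.hasFDerivAt.comp_hasDerivAt s (hode s hs)).congr_deriv ?_
  simp only [Complex.imCLM_apply, Complex.div_im, Complex.im_ofNat, Complex.re_ofNat,
    Complex.sub_re, Complex.sub_im, Complex.ofReal_re, Complex.ofReal_im, Complex.sq_norm]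
  ring

theorem loewner_im_div_bounds {m : ℝ} (ht : 0 < t) (hU : Continuous U)
    (hode : ∀ s ∈ Icc 0 t, HasDerivAt g (2 / (g s - U s)) s) (hne : ∀ s ∈ Icc 0 t, g s ≠ U s)
    (him : 0 < (g 0).im) (hm : 0 < m) (hdist : ∀ s ∈ Ioo 0 t, m < ‖g s - U s‖) :
    (g t).im / (g 0).im ≤ 1 ∧ Real.exp (-(2 / m ^ 2 * t)) < (g t).im / (g 0).im := by
  rw [loewner_im_eq ht.le hU hode hne, mul_div_cancel_left₀ _ him.ne']
  refine ⟨Real.exp_le_one_iff.2 (neg_nonpos.2 ?_), Real.exp_lt_exp.2 (neg_lt_neg ?_)⟩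
  · exact intervalIntegral.integral_nonneg ht.le fun s _ => by positivity
  · simpa using intervalIntegral_lt_mul_sub_of_lt ht
      ((loewner_continuousOn_two_div_norm_sq hU hode hne).intervalIntegrable_of_Icc ht.le)
      fun s hs => div_lt_div_of_pos_left two_pos (by positivity)
        (pow_lt_pow_left₀ (hdist s hs) hm.le two_ne_zero)

end Loewner

/-- If `λ_t = min_{0≤s≤t}|z - U(s)| ≥ √(8t)` then
`|g_t(z)-z| < 4t/(λ_t+√(λ_t²-8t))` and
`1 ≥ Im g_t(z)/Im z > exp(-8t/(λ_t+√(λ_t²-8t))²)`. -/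
theorem loewner_corollary_estimates
    (U : ℝ → ℝ) (hU : Continuous U) (z : ℂ) (hz : 0 < z.im)
    (T : ℝ) (g : ℝ → ℂ) (hg0 : g 0 = z)
    (hode : ∀ s ∈ Set.Ico (0:ℝ) T, HasDerivAt g (2 / (g s - (U s : ℂ))) s)
    (hne : ∀ s ∈ Set.Ico (0:ℝ) T, g s ≠ (U s : ℂ))
    (t : ℝ) (ht : 0 < t) (htT : t < T)
    (lam : ℝ) (hlamdef : lam = sInf ((fun s => ‖z - (U s : ℂ)‖) '' Set.Icc 0 t))
    (hlam : Real.sqrt (8 * t) ≤ lam) :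
    ‖g t - z‖ < 4 * t / (lam + Real.sqrt (lam ^ 2 - 8 * t))
      ∧ (g t).im / z.im ≤ 1
      ∧ Real.exp (-(8 * t) / (lam + Real.sqrt (lam ^ 2 - 8 * t)) ^ 2) < (g t).im / z.im := by
  subst hg0
  have hode' := fun s (hs : s ∈ Icc 0 t) => hode s (Icc_subset_Ico_right htT hs)
  have hne' := fun s (hs : s ∈ Icc 0 t) => hne s (Icc_subset_Ico_right htT hs)
  have hlam_le : ∀ s ∈ Icc 0 t, lam ≤ ‖g 0 - U s‖ := fun s hs =>
    hlamdef ▸ csInf_le ⟨0, by rintro _ ⟨u, -, rfl⟩; positivity⟩ ⟨s, hs, rfl⟩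
  obtain ⟨-, h8t⟩ := Real.sqrt_le_iff.1 hlam
  have hlam_pos : 0 < lam := (Real.sqrt_pos.2 (by linarith)).trans_le hlam
  set r := Real.sqrt (lam ^ 2 - 8 * t)
  have hr : r ^ 2 = lam ^ 2 - 8 * t := Real.sq_sqrt (by linarith)
  have hm : 0 < (lam + r) / 2 := by positivity
  have hroot : (lam + r) / 2 + 2 * t / ((lam + r) / 2) = lam := by
    have hother : 2 * t / ((lam + r) / 2) = (lam - r) / 2 := by
      rw [div_eq_iff hm.ne']
      linear_combination hr / 4
    linarith
  have hdist := loewner_lt_norm_sub hU hode' hm hlam_le hroot.le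
  have hdist' := fun s (hs : s ∈ Ioo 0 t) => hdist s (Ioo_subset_Ico_self hs)
  obtain ⟨hle, hlt⟩ := loewner_im_div_bounds ht hU hode' hne' hz hm hdist'
  refine ⟨?_, hle, ?_⟩
  · convert loewner_norm_sub_lt ht hU hode' hne' hm hdist' using 1
    field_simp
    norm_num
  · convert hlt using 2
    field_simp
    ring
end

section
/- Let $U:[0,\infty)\to\mathbb{R}$ be continuous and $g_t$ the chordal Loewner chain driven by $U$. Suppose $z\in\mathbb{H}$, $t>0$, and $\lambda_t=\min_{0\le s\le t}|z-U(s)|$ satisfies $\lambda_t\ge\sqrt{8t}$. Then $t< T_z$, i.e., the solution $g_s(z)$ does not blow up on $[0,t]$ (equivalently $\inf_{0\le s\le t}|g_s(z)-U(s)|>0$). -/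
/-!
On the closed ball of radius `ρ = λ/2` about `z`, every `w` stays at distance `≥ ρ` from `U s`
for `s ≤ t`, so there the Loewner field `2 / (w - U s)` is bounded by `2 / ρ` and Lipschitz.
Cutting the field off to `0` outside the ball makes the speed bound global, so a Picard–Lindelöf
solution on `[0, t]` moves at most `(2 / ρ) t ≤ ρ` (this is `8 t ≤ λ²`) and never leaves the
ball, where the cut-off field is the true one. The one-sided derivatives at `0` and `t` become
two-sided after continuing the solution affinely beyond the endpoints.
-/

open Set Metric NNReal Topology

theorem lipschitzOnWith_inv₀ {𝕜 : Type*} [NormedDivisionRing 𝕜] {r : ℝ≥0} (hr : 0 < r) :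
    LipschitzOnWith (r ^ 2)⁻¹ (fun x : 𝕜 => x⁻¹) {x | r ≤ ‖x‖} := by
  refine LipschitzOnWith.of_dist_le_mul fun x (hx : r ≤ ‖x‖) y (hy : r ≤ ‖y‖) => ?_
  have hr' : (0 : ℝ) < r := hr
  rw [dist_inv_inv₀ (norm_pos_iff.mp (hr'.trans_le hx)) (norm_pos_iff.mp (hr'.trans_le hy)),
    div_eq_inv_mul, NNReal.coe_inv, NNReal.coe_pow]
  gcongr
  rw [sq]
  gcongr

theorem le_norm_sub_of_mem_closedBall {E : Type*} [SeminormedAddCommGroup E] {z w c : E} {ρ : ℝ}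
    (hw : w ∈ closedBall z ρ) (hz : 2 * ρ ≤ ‖z - c‖) : ρ ≤ ‖w - c‖ := by
  have hzw : ‖z - w‖ ≤ ρ := by rw [← dist_eq_norm]; exact mem_closedBall'.mp hw
  linarith [norm_sub_le_norm_sub_add_norm_sub z w c]

theorem exists_hasDerivAt_eqOn_of_hasDerivWithinAt_Icc {E : Type*} [NormedAddCommGroup E]
    [NormedSpace ℝ E] {f f' : ℝ → E} {a b : ℝ} (hab : a < b)
    (hf : ∀ s ∈ Icc a b, HasDerivWithinAt f (f' s) (Icc a b) s) :
    ∃ g : ℝ → E, EqOn g f (Icc a b) ∧ ∀ s ∈ Icc a b, HasDerivAt g (f' s) s := by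
  set tangent : ℝ → ℝ → E := fun c y => f c + (y - c) • f' c
  have htangent (c y : ℝ) : HasDerivAt (tangent c) (f' c) y := by
    simpa only [one_smul] using
      ((hasDerivAt_id' y).sub_const c).smul_const (f' c) |>.const_add (f c)
  set g : ℝ → E := fun y => if y < a then tangent a y else if b < y then tangent b y else f y
  have hgf : EqOn g f (Icc a b) := fun y hy => by simp [g, hy.1.not_gt, hy.2.not_gt]
  have hleft : HasDerivWithinAt g (f' a) (Iic a) a := by
    refine (htangent a a).hasDerivWithinAt.congr (fun y (hy : y ≤ a) => ?_)
      (by simp [g, tangent, hab.not_gt])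
    rcases hy.lt_or_eq with hy | rfl
    · simp [g, hy]
    · simp [g, tangent, hab.not_gt]
  have hright : HasDerivWithinAt g (f' b) (Ici b) b := by
    refine (htangent b b).hasDerivWithinAt.congr (fun y (hy : b ≤ y) => ?_)
      (by simp [g, tangent, hab.not_gt])
    rcases hy.lt_or_eq with hy | rfl
    · simp [g, hy, (hab.trans hy).not_gt]
    · simp [g, tangent, hab.not_gt]
  refine ⟨g, hgf, fun s hs => ?_⟩
  have hg : HasDerivWithinAt g (f' s) (Icc a b) s := (hf s hs).congr hgf (hgf hs)
  rcases hs.1.eq_or_lt with rfl | has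
  · simpa [Iic_union_Ici] using hleft.union (hg.mono_of_mem_nhdsWithin (Icc_mem_nhdsGE hab))
  rcases hs.2.eq_or_lt with rfl | hsb
  · simpa [Iic_union_Ici] using (hg.mono_of_mem_nhdsWithin (Icc_mem_nhdsLE hab)).union hright
  · exact hg.hasDerivAt (Icc_mem_nhds has hsb)

noncomputable def loewnerField (U : ℝ → ℝ) (s : ℝ) (w : ℂ) : ℂ := 2 / (w - U s)

section loewnerField

variable {U : ℝ → ℝ} {z : ℂ} {s : ℝ} {ρ : ℝ≥0}

theorem lipschitzOnWith_loewnerField (hρ : 0 < ρ) (hz : 2 * ρ ≤ ‖z - U s‖) :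
    LipschitzOnWith (2 * (ρ ^ 2)⁻¹) (loewnerField U s) (closedBall z ρ) := by
  refine LipschitzOnWith.of_dist_le_mul fun x hx y hy => ?_
  calc dist (loewnerField U s x) (loewnerField U s y)
      = 2 * dist (x - U s)⁻¹ (y - U s)⁻¹ := by
        simp only [loewnerField, div_eq_mul_inv, dist_eq_norm, ← mul_sub, norm_mul,
          Complex.norm_two]
    _ ≤ 2 * ((ρ ^ 2)⁻¹ * dist (x - U s) (y - U s)) := by
        gcongr
        exact (lipschitzOnWith_inv₀ hρ).dist_le_mul _ (le_norm_sub_of_mem_closedBall hx hz) _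
          (le_norm_sub_of_mem_closedBall hy hz)
    _ = ↑(2 * (ρ ^ 2)⁻¹) * dist x y := by
        rw [dist_sub_right]; push_cast; ring

theorem norm_loewnerField_le {w : ℂ} (hρ : 0 < ρ) (hw : ρ ≤ ‖w - U s‖) :
    ‖loewnerField U s w‖ ≤ 2 / ρ := by
  rw [loewnerField, norm_div, Complex.norm_two]
  gcongr

theorem continuousOn_loewnerField {w : ℂ} {S : Set ℝ} (hU : Continuous U)
    (hw : ∀ s ∈ S, w ≠ U s) : ContinuousOn (fun s => loewnerField U s w) S :=
  continuousOn_const.div (by fun_prop) fun s hs => sub_ne_zero.mpr (hw s hs)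

theorem norm_indicator_loewnerField_le (hρ : 0 < ρ) (hz : 2 * ρ ≤ ‖z - U s‖) (w : ℂ) :
    ‖(closedBall z ρ).indicator (loewnerField U s) w‖ ≤ 2 / ρ := by
  by_cases hw : w ∈ closedBall z ρ
  · rw [indicator_of_mem hw]
    exact norm_loewnerField_le hρ (le_norm_sub_of_mem_closedBall hw hz)
  · rw [indicator_of_notMem hw, norm_zero]
    positivity

theorem isPicardLindelof_loewnerField (hU : Continuous U) {t : ℝ} (ht : 0 ≤ t) (hρ : 0 < ρ)
    (htρ : 2 * t ≤ ρ ^ 2) (hzU : ∀ s ∈ Icc 0 t, 2 * ρ ≤ ‖z - U s‖) :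
    IsPicardLindelof (fun s => (closedBall z ρ).indicator (loewnerField U s))
      (⟨0, left_mem_Icc.mpr ht⟩ : Icc 0 t) z ρ 0 (2 / ρ) (2 * (ρ ^ 2)⁻¹) where
  lipschitzOnWith s hs x hx y hy := by
    simpa only [indicator_of_mem hx, indicator_of_mem hy]
      using lipschitzOnWith_loewnerField hρ (hzU s hs) hx hy
  continuousOn x hx := by
    refine (continuousOn_loewnerField hU fun s hs hxs => ?_).congr
      fun s _ => indicator_of_mem hx _
    have := le_norm_sub_of_mem_closedBall hx (hzU s hs)
    rw [hxs, sub_self, norm_zero] at this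
    exact hρ.not_ge this
  norm_le s hs x _ := norm_indicator_loewnerField_le hρ (hzU s hs) x
  mul_max_le := by
    have hρ' : (0 : ℝ) < ρ := hρ
    simp only [NNReal.coe_div, NNReal.coe_ofNat, sub_zero, sub_self, max_eq_left ht,
      NNReal.coe_zero]
    rw [div_mul_eq_mul_div, div_le_iff₀ hρ']
    nlinarith

theorem exists_loewner_trajectory (hU : Continuous U) {t : ℝ} (ht : 0 ≤ t) (hρ : 0 < ρ)
    (htρ : 2 * t ≤ ρ ^ 2) (hzU : ∀ s ∈ Icc 0 t, 2 * ρ ≤ ‖z - U s‖) :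
    ∃ g : ℝ → ℂ, g 0 = z ∧ ∀ s ∈ Icc 0 t,
      HasDerivWithinAt g (loewnerField U s (g s)) (Icc 0 t) s ∧ ρ ≤ ‖g s - U s‖ := by
  obtain ⟨g, hg0, hg⟩ :=
    (isPicardLindelof_loewnerField hU ht hρ htρ hzU).exists_eq_forall_mem_Icc_hasDerivWithinAt₀
  have hball : ∀ s ∈ Icc 0 t, g s ∈ closedBall z ρ := by
    intro s hs
    have hmvt := (convex_Icc 0 t).norm_image_sub_le_of_norm_hasDerivWithin_le hg
      (fun s hs => norm_indicator_loewnerField_le hρ (hzU s hs) _) (left_mem_Icc.mpr ht) hs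
    rw [hg0, sub_zero, Real.norm_of_nonneg hs.1] at hmvt
    have hρ' : (0 : ℝ) < ρ := hρ
    rw [mem_closedBall, dist_eq_norm]
    calc ‖g s - z‖ ≤ 2 / ρ * s := hmvt
      _ ≤ 2 / ρ * t := by gcongr; exact hs.2
      _ ≤ ρ := by rw [div_mul_eq_mul_div, div_le_iff₀ hρ']; nlinarith
  refine ⟨g, hg0, fun s hs => ⟨?_, ?_⟩⟩
  · simpa only [indicator_of_mem (hball s hs)] using hg s hs
  · exact le_norm_sub_of_mem_closedBall (hball s hs) (hzU s hs)

end loewnerField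

theorem loewner_no_blowup_general
    (U : ℝ → ℝ) (hU : Continuous U) (z : ℂ)
    (t : ℝ) (ht : 0 < t)
    (hlam : Real.sqrt (8 * t) ≤ sInf ((fun s => ‖z - (U s : ℂ)‖) '' Set.Icc 0 t)) :
    ∃ g : ℝ → ℂ, g 0 = z
      ∧ (∀ s ∈ Set.Icc (0:ℝ) t, HasDerivAt g (2 / (g s - (U s : ℂ))) s)
      ∧ 0 < sInf ((fun s => ‖g s - (U s : ℂ)‖) '' Set.Icc 0 t) := by
  set lam := sInf ((fun s => ‖z - (U s : ℂ)‖) '' Icc 0 t)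
  have hlam_pos : 0 < lam := (Real.sqrt_pos.mpr (by positivity)).trans_le hlam
  have hlam_le : ∀ s ∈ Icc 0 t, lam ≤ ‖z - U s‖ := fun s hs =>
    csInf_le ⟨0, forall_mem_image.mpr fun _ _ => norm_nonneg _⟩ (mem_image_of_mem _ hs)
  have hlam_sq : 8 * t ≤ lam ^ 2 := (Real.sqrt_le_left hlam_pos.le).mp hlam
  set ρ : ℝ≥0 := ⟨lam / 2, by positivity⟩
  have hρ : (ρ : ℝ) = lam / 2 := rfl
  obtain ⟨g, hg0, hg⟩ := exists_loewner_trajectory (z := z) (ρ := ρ) hU ht.le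
    (by rw [← NNReal.coe_pos, hρ]; positivity) (by rw [hρ]; nlinarith)
    (fun s hs => by rw [hρ]; linarith [hlam_le s hs])
  obtain ⟨g', hg'g, hg'⟩ :=
    exists_hasDerivAt_eqOn_of_hasDerivWithinAt_Icc ht fun s hs => (hg s hs).1
  refine ⟨g', (hg'g (left_mem_Icc.mpr ht.le)).trans hg0, fun s hs => ?_, ?_⟩
  · simpa only [loewnerField, hg'g hs] using hg' s hs
  · refine (half_pos hlam_pos).trans_le
      (le_csInf ((nonempty_Icc.mpr ht.le).image _) (forall_mem_image.mpr fun s hs => ?_))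
    simpa only [hg'g hs, hρ] using (hg s hs).2

/-- if `λ_t = min_{0≤s≤t}|z - U(s)| ≥ √(8t)` then the chordal Loewner
trajectory from `z` exists on all of `[0,t]` without blowing up:
`inf_{0≤s≤t}|g_s(z) - U(s)| > 0` (i.e. `t < T_z`). -/
theorem loewner_no_blowup
    (U : ℝ → ℝ) (hU : Continuous U) (z : ℂ) (hz : 0 < z.im)
    (t : ℝ) (ht : 0 < t)
    (hlam : Real.sqrt (8 * t) ≤ sInf ((fun s => ‖z - (U s : ℂ)‖) '' Set.Icc 0 t)) :
    ∃ g : ℝ → ℂ, g 0 = z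
      ∧ (∀ s ∈ Set.Icc (0:ℝ) t, HasDerivAt g (2 / (g s - (U s : ℂ))) s)
      ∧ 0 < sInf ((fun s => ‖g s - (U s : ℂ)‖) '' Set.Icc 0 t) :=
  loewner_no_blowup_general U hU z t ht hlam
end
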